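/- arXiv:2412.20886 — 2 statements merged into one kernel-verified Lean document; each statement's English description precedes it below -/
import Mathlib

section
/- The topology τ_c on OI_n(L), generated by the base consisting of all sets of the form ↑_≼ α \ (↑_≼ α₁ ∪ ⋯ ∪ ↑_≼ α_k) with α, α₁, …, α_k ∈ OI_n(L) and α_i ∈ ↑_≼ α for each i, is Hausdorff and compact, multiplication on (OI_n(L), τ_c) is separately continuous, and the inversion map α ↦ α⁻¹ is continuous. -/
open Set Topology TopologicalSpace

universe u v

variable {L : Type u}

/-- A partial map `f : L →. L` is a finite partial order isomorphism of rank `≤ n`: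
its domain is finite with at most `n` elements, and it is an order isomorphism
from its domain onto its range. -/
def IsOI [LinearOrder L] (n : ℕ) (f : L →. L) : Prop :=
  f.Dom.Finite ∧ f.Dom.ncard ≤ n ∧
    ∀ x ∈ f.Dom, ∀ y ∈ f.Dom, ∀ a b, a ∈ f x → b ∈ f y → (x ≤ y ↔ a ≤ b)

/-- The semigroup `OI_n(L)` of finite partial order isomorphisms of rank `≤ n`. -/
def OI (L : Type u) [LinearOrder L] (n : ℕ) : Type u := {f : L →. L // IsOI n f}

theorem IsOI.comp [LinearOrder L] {n : ℕ} {f g : L →. L}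
    (hf : IsOI n f) (hg : IsOI n g) : IsOI n (g.comp f) := by
  have hsub : (g.comp f).Dom ⊆ f.Dom := by
    intro x hx
    rw [PFun.mem_dom] at hx ⊢
    obtain ⟨c, hc⟩ := hx
    rw [PFun.comp_apply] at hc
    obtain ⟨b, hb, -⟩ := Part.mem_bind_iff.mp hc
    exact ⟨b, hb⟩
  refine ⟨hf.1.subset hsub, le_trans (Set.ncard_le_ncard hsub hf.1) hf.2.1, ?_⟩
  intro x hx y hy a b ha hb
  rw [PFun.comp_apply] at ha hb
  obtain ⟨u, hu, hau⟩ := Part.mem_bind_iff.mp ha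
  obtain ⟨v, hv, hbv⟩ := Part.mem_bind_iff.mp hb
  have hxd : x ∈ f.Dom := (PFun.mem_dom _ _).mpr ⟨u, hu⟩
  have hyd : y ∈ f.Dom := (PFun.mem_dom _ _).mpr ⟨v, hv⟩
  have hud : u ∈ g.Dom := (PFun.mem_dom _ _).mpr ⟨a, hau⟩
  have hvd : v ∈ g.Dom := (PFun.mem_dom _ _).mpr ⟨b, hbv⟩
  exact (hf.2.2 x hxd y hyd u v hu hv).trans (hg.2.2 u hud v hvd a b hau hbv)

/-- Multiplication on `OI_n(L)`, written in the paper's (left-to-right) convention: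
`x (α * β) = (x α) β`, i.e. `α * β` is the composition `β ∘ α` of partial maps. -/
instance [LinearOrder L] {n : ℕ} : Semigroup (OI L n) where
  mul a b := ⟨b.1.comp a.1, a.2.comp b.2⟩
  mul_assoc a b c := Subtype.ext (PFun.comp_assoc c.1 b.1 a.1).symm

/-- The inverse partial map of a partial map. -/
noncomputable def pinv (f : L →. L) : L →. L :=
  fun y => ⟨∃ x, y ∈ f x, fun h => Classical.choose h⟩

theorem pinv_spec {f : L →. L} {y b : L} (h : b ∈ pinv f y) : y ∈ f b := by
  obtain ⟨hd, hb⟩ := h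
  exact hb ▸ Classical.choose_spec hd

theorem IsOI.pinv [LinearOrder L] {n : ℕ} {f : L →. L} (hf : IsOI n f) :
    IsOI n (_root_.pinv f) := by
  classical
  have hdom : (_root_.pinv f).Dom =
      (fun x => if h : (f x).Dom then (f x).get h else x) '' f.Dom := by
    ext y
    constructor
    · rintro ⟨x, hx⟩
      have hxd : (f x).Dom := Part.dom_iff_mem.mpr ⟨y, hx⟩
      refine ⟨x, hxd, ?_⟩
      show (if h : (f x).Dom then (f x).get h else x) = y
      rw [dif_pos hxd]
      exact Part.get_eq_of_mem hx hxd
    · rintro ⟨x, hxd, rfl⟩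
      have hxd' : (f x).Dom := hxd
      refine ⟨x, ?_⟩
      show (if h : (f x).Dom then (f x).get h else x) ∈ f x
      rw [dif_pos hxd']
      exact Part.get_mem hxd'
  constructor
  · rw [hdom]; exact hf.1.image _
  constructor
  · rw [hdom]
    exact le_trans (Set.ncard_image_le hf.1) hf.2.1
  · intro y1 h1 y2 h2 b1 b2 hb1 hb2
    have e1 := pinv_spec hb1
    have e2 := pinv_spec hb2
    have d1 : b1 ∈ f.Dom := (PFun.mem_dom _ _).mpr ⟨y1, e1⟩
    have d2 : b2 ∈ f.Dom := (PFun.mem_dom _ _).mpr ⟨y2, e2⟩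
    exact (hf.2.2 b1 d1 b2 d2 y1 y2 e1 e2).symm

/-- Inversion `α ↦ α⁻¹` on `OI_n(L)`: the inverse partial bijection. -/
noncomputable instance [LinearOrder L] {n : ℕ} : Inv (OI L n) :=
  ⟨fun a => ⟨_root_.pinv a.1, a.2.pinv⟩⟩

/-- The natural partial order on the inverse semigroup `OI_n(L)`:
`a ≼ b` iff `a = b * e` for some idempotent `e`. -/
def nle [LinearOrder L] {n : ℕ} (a b : OI L n) : Prop :=
  ∃ e : OI L n, e * e = e ∧ a = b * e

/-- The up-set `↑_≼ a = {b | a ≼ b}` with respect to the natural partial order. -/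
def upSet [LinearOrder L] {n : ℕ} (a : OI L n) : Set (OI L n) := {b | nle a b}

/-- The topology `τ_c` on `OI_n(L)`, generated by the base consisting of the sets
`↑_≼ a \ (↑_≼ a₁ ∪ ⋯ ∪ ↑_≼ a_k)` with `a_i ∈ ↑_≼ a`. -/
def tauC (L : Type u) [LinearOrder L] (n : ℕ) : TopologicalSpace (OI L n) :=
  TopologicalSpace.generateFrom
    {U | ∃ (a : OI L n) (F : Finset (OI L n)), (∀ b ∈ F, nle a b) ∧
      U = upSet a \ ⋃ b ∈ F, upSet b}

section Aux

variable [LinearOrder L] {n : ℕ}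

/-- The graph of an element of `OI L n`, as a set of pairs. -/
def graphS (a : OI L n) : Set (L × L) := {p | p.2 ∈ a.1 p.1}

theorem graphS_ord (a : OI L n) : ∀ p ∈ graphS a, ∀ q ∈ graphS a,
    (p.1 ≤ q.1 ↔ p.2 ≤ q.2) := fun p hp q hq =>
  a.2.2.2 p.1 ((PFun.mem_dom _ _).mpr ⟨p.2, hp⟩) q.1 ((PFun.mem_dom _ _).mpr ⟨q.2, hq⟩)
    p.2 q.2 hp hq

theorem OI_inj (a : OI L n) {x y z : L} (hx : z ∈ a.1 x) (hy : z ∈ a.1 y) : x = y :=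
  le_antisymm ((graphS_ord a (x, z) hx (y, z) hy).mpr le_rfl)
    ((graphS_ord a (y, z) hy (x, z) hx).mpr le_rfl)

open Classical in
theorem graphS_sub (a : OI L n) : graphS a ⊆
    (fun x => (x, if h : (a.1 x).Dom then (a.1 x).get h else x)) '' a.1.Dom := by
  classical
  rintro ⟨x, y⟩ hy
  have hd : (a.1 x).Dom := Part.dom_iff_mem.mpr ⟨y, hy⟩
  exact ⟨x, hd, by simp [dif_pos hd, Part.get_eq_of_mem hy hd]⟩

theorem graphS_finite (a : OI L n) : (graphS a).Finite :=
  (a.2.1.image _).subset (graphS_sub a)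

theorem graphS_ncard (a : OI L n) : (graphS a).ncard ≤ n :=
  le_trans (le_trans (Set.ncard_le_ncard (graphS_sub a) (a.2.1.image _))
    (Set.ncard_image_le a.2.1)) a.2.2.1

theorem mem_mulOI {a b : OI L n} {x z : L} :
    z ∈ (a * b).1 x ↔ ∃ m, m ∈ a.1 x ∧ z ∈ b.1 m := by
  show z ∈ (b.1.comp a.1) x ↔ _
  rw [PFun.comp_apply]
  exact Part.mem_bind_iff

theorem idem_fix {e : OI L n} (he : e * e = e) {x y : L} (h : y ∈ e.1 x) : x = y := by
  have h2 : y ∈ (e * e).1 x := by rw [he]; exact h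
  obtain ⟨m, hm, hym⟩ := mem_mulOI.mp h2
  have hmy : m = y := Part.mem_unique hm h
  subst hmy
  exact OI_inj e h hym

theorem mem_pinvOI {a : OI L n} {x y : L} : y ∈ (a⁻¹).1 x ↔ x ∈ a.1 y := by
  constructor
  · exact pinv_spec
  · intro h
    have hd : ∃ b, x ∈ a.1 b := ⟨y, h⟩
    exact ⟨hd, OI_inj a (Classical.choose_spec hd) h⟩

theorem mem_e {a : OI L n} {x z : L} :
    z ∈ (a⁻¹ * a).1 x ↔ x = z ∧ ∃ m, x ∈ a.1 m := by
  rw [mem_mulOI]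
  constructor
  · rintro ⟨m, hm, hz⟩
    have hm' : x ∈ a.1 m := mem_pinvOI.mp hm
    exact ⟨Part.mem_unique hm' hz, m, hm'⟩
  · rintro ⟨rfl, m, hm⟩
    exact ⟨m, mem_pinvOI.mpr hm, hm⟩

theorem nle_iff {a b : OI L n} : nle a b ↔ graphS a ⊆ graphS b := by
  constructor
  · rintro ⟨e, he, rfl⟩
    rintro ⟨x, y⟩ hy
    obtain ⟨m, hm, hym⟩ := mem_mulOI.mp hy
    have := idem_fix he hym
    subst this
    exact hm
  · intro hsub
    refine ⟨a⁻¹ * a, ?_, ?_⟩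
    · apply Subtype.ext
      apply PFun.ext
      intro x z
      constructor
      · intro h
        obtain ⟨m, hm, hz⟩ := mem_mulOI.mp h
        obtain ⟨rfl, -⟩ := mem_e.mp hm
        exact hz
      · intro h
        obtain ⟨hxz, hr⟩ := mem_e.mp h
        exact mem_mulOI.mpr ⟨x, mem_e.mpr ⟨rfl, hr⟩, h⟩
    · apply Subtype.ext
      apply PFun.ext
      intro x z
      constructor
      · intro h
        have hb : z ∈ b.1 x := hsub (show (x, z) ∈ graphS a from h)
        exact mem_mulOI.mpr ⟨z, hb, mem_e.mpr ⟨rfl, x, h⟩⟩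
      · intro h
        obtain ⟨m, hm, hz⟩ := mem_mulOI.mp h
        obtain ⟨rfl, k, hk⟩ := mem_e.mp hz
        have hbk : m ∈ b.1 k := hsub (show (k, m) ∈ graphS a from hk)
        obtain rfl := OI_inj b hbk hm
        exact hk

theorem nle_refl (a : OI L n) : nle a a := nle_iff.mpr subset_rfl

/-- Build a partial map from a set of pairs. -/
noncomputable def ofGraph (G : Set (L × L)) : L →. L :=
  fun x => ⟨∃ y, (x, y) ∈ G, fun h => Classical.choose h⟩

theorem mem_ofGraph {G : Set (L × L)}
    (hord : ∀ p ∈ G, ∀ q ∈ G, (p.1 ≤ q.1 ↔ p.2 ≤ q.2)) {x y : L} :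
    y ∈ ofGraph G x ↔ (x, y) ∈ G := by
  constructor
  · rintro ⟨h, rfl⟩
    exact Classical.choose_spec h
  · intro h
    have hd : ∃ y', (x, y') ∈ G := ⟨y, h⟩
    refine ⟨hd, ?_⟩
    have h' : (x, Classical.choose hd) ∈ G := Classical.choose_spec hd
    exact le_antisymm ((hord (x, Classical.choose hd) h' (x, y) h).mp le_rfl)
      ((hord (x, y) h (x, Classical.choose hd) h').mp le_rfl)

theorem isOI_ofGraph {G : Set (L × L)} (hfin : G.Finite) (hcard : G.ncard ≤ n)
    (hord : ∀ p ∈ G, ∀ q ∈ G, (p.1 ≤ q.1 ↔ p.2 ≤ q.2)) :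
    IsOI n (ofGraph G) := by
  have hdom : (ofGraph G).Dom = Prod.fst '' G := by
    ext x
    constructor
    · rintro ⟨y, hy⟩
      exact ⟨(x, y), hy, rfl⟩
    · rintro ⟨⟨x', y⟩, hy, rfl⟩
      exact ⟨y, hy⟩
  refine ⟨hdom ▸ hfin.image _, ?_, ?_⟩
  · rw [hdom]
    exact le_trans (Set.ncard_image_le hfin) hcard
  · intro x hx y hy a b ha hb
    exact hord (x, a) ((mem_ofGraph hord).mp ha) (y, b) ((mem_ofGraph hord).mp hb)

theorem graphS_ofGraphOI {G : Set (L × L)} (hfin : G.Finite) (hcard : G.ncard ≤ n)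
    (hord : ∀ p ∈ G, ∀ q ∈ G, (p.1 ≤ q.1 ↔ p.2 ≤ q.2)) :
    graphS (⟨ofGraph G, isOI_ofGraph hfin hcard hord⟩ : OI L n) = G := by
  ext ⟨x, y⟩
  exact mem_ofGraph hord

open Classical in
/-- The embedding of `OI L n` into `L × L → Bool` via graphs. -/
noncomputable def phiOI (a : OI L n) : L × L → Bool :=
  fun p => @decide (p ∈ graphS a) (Classical.propDecidable _)

theorem phiOI_eq_true {a : OI L n} {p : L × L} : phiOI a p = true ↔ p ∈ graphS a :=
  @decide_eq_true_iff _ (Classical.propDecidable _)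

theorem phiOI_eq_false {a : OI L n} {p : L × L} : phiOI a p = false ↔ p ∉ graphS a :=
  @decide_eq_false_iff_not _ (Classical.propDecidable _)

theorem phiOI_injective : Function.Injective (phiOI : OI L n → L × L → Bool) := by
  intro a b h
  apply Subtype.ext
  apply PFun.ext
  intro x y
  have := congrFun h (x, y)
  rw [show (phiOI a (x,y) = phiOI b (x,y)) ↔ _ from decide_eq_decide] at this
  exact this

theorem isOpen_upSet (a : OI L n) : IsOpen[tauC L n] (upSet a) := by
  apply TopologicalSpace.isOpen_generateFrom_of_mem
  exact ⟨a, ∅, by simp, by simp⟩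

/-- The coordinate set `{x | p ∈ graphS x}` is `τ_c`-open (needs `0 < n`). -/
theorem isOpen_coord (hn : 0 < n) (p : L × L) :
    IsOpen[tauC L n] {x : OI L n | p ∈ graphS x} := by
  have hord : ∀ q ∈ ({p} : Set (L × L)), ∀ r ∈ ({p} : Set (L × L)),
      (q.1 ≤ r.1 ↔ q.2 ≤ r.2) := by
    intro q hq r hr
    rw [Set.mem_singleton_iff] at hq hr
    subst hq; subst hr
    simp
  have hcard : ({p} : Set (L × L)).ncard ≤ n := by
    rw [Set.ncard_singleton]; exact hn
  have hs : graphS (⟨ofGraph {p},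
      isOI_ofGraph (Set.finite_singleton p) hcard hord⟩ : OI L n) = {p} :=
    graphS_ofGraphOI (Set.finite_singleton p) hcard hord
  have heq : {x : OI L n | p ∈ graphS x} =
      upSet (⟨ofGraph {p}, isOI_ofGraph (Set.finite_singleton p) hcard hord⟩ : OI L n) := by
    ext x
    show p ∈ graphS x ↔ nle (⟨ofGraph {p}, isOI_ofGraph (Set.finite_singleton p) hcard hord⟩ : OI L n) x
    exact (nle_iff.trans (by rw [hs, Set.singleton_subset_iff])).symm
  rw [heq]
  exact isOpen_upSet _

/-- The complement coordinate set is also `τ_c`-open. -/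
theorem isOpen_coord_compl (p : L × L) :
    IsOpen[tauC L n] {x : OI L n | p ∉ graphS x} := by
  letI := tauC L n
  rw [isOpen_iff_forall_mem_open]
  intro c hc
  by_cases hex : ∃ d : OI L n, graphS d = insert p (graphS c)
  · obtain ⟨d, hd⟩ := hex
    refine ⟨upSet c \ upSet d, ?_, ?_, ?_⟩
    · intro x hx hpx
      rcases hx with ⟨hxc, hxd⟩
      exact hxd (nle_iff.mpr (by rw [hd]; exact Set.insert_subset hpx (nle_iff.mp hxc)))
    · apply TopologicalSpace.isOpen_generateFrom_of_mem
      refine ⟨c, {d}, ?_, by simp⟩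
      intro b hb
      rw [Finset.mem_singleton] at hb
      subst hb
      exact nle_iff.mpr (by rw [hd]; exact Set.subset_insert _ _)
    · refine ⟨nle_refl c, fun hcd => ?_⟩
      exact hc (nle_iff.mp hcd (by rw [hd]; exact Set.mem_insert _ _))
  · refine ⟨upSet c, ?_, isOpen_upSet c, nle_refl c⟩
    intro x hx hpx
    apply hex
    have hsub : insert p (graphS c) ⊆ graphS x := Set.insert_subset hpx (nle_iff.mp hx)
    have hfin : (insert p (graphS c)).Finite := (graphS_finite x).subset hsub
    have hcard : (insert p (graphS c)).ncard ≤ n :=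
      le_trans (Set.ncard_le_ncard hsub (graphS_finite x)) (graphS_ncard x)
    have hord : ∀ q ∈ insert p (graphS c), ∀ r ∈ insert p (graphS c),
        (q.1 ≤ r.1 ↔ q.2 ≤ r.2) := fun q hq r hr =>
      graphS_ord x q (hsub hq) r (hsub hr)
    exact ⟨⟨ofGraph (insert p (graphS c)), isOI_ofGraph hfin hcard hord⟩,
      graphS_ofGraphOI hfin hcard hord⟩

theorem continuous_to_bool {X : Type*} [t : TopologicalSpace X] {f : X → Bool}
    (h1 : IsOpen {x | f x = true}) (h2 : IsOpen {x | f x = false}) : Continuous f := by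
  rw [continuous_def]
  intro s _
  by_cases ht : true ∈ s <;> by_cases hf : false ∈ s
  · have : f ⁻¹' s = Set.univ := by
      ext x; simp only [Set.mem_preimage, Set.mem_univ, iff_true]
      cases f x
      · exact hf
      · exact ht
    rw [this]; exact isOpen_univ
  · have : f ⁻¹' s = {x | f x = true} := by
      ext x; simp only [Set.mem_preimage, Set.mem_setOf_eq]
      cases f x <;> simp [ht, hf]
    rw [this]; exact h1
  · have : f ⁻¹' s = {x | f x = false} := by
      ext x; simp only [Set.mem_preimage, Set.mem_setOf_eq]
      cases f x <;> simp [ht, hf]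
    rw [this]; exact h2
  · have : f ⁻¹' s = ∅ := by
      ext x; simp only [Set.mem_preimage, Set.mem_empty_iff_false, iff_false]
      cases f x
      · exact hf
      · exact ht
    rw [this]; exact isOpen_empty

theorem isOpen_coordTrue' (p : L × L) : IsOpen {g : L × L → Bool | g p = true} := by
  have h : {g : L × L → Bool | g p = true} = (fun g : L × L → Bool => g p) ⁻¹' {true} := by
    ext g; simp
  rw [h]
  exact (continuous_apply p).isOpen_preimage _ (isOpen_discrete _)

theorem isClosed_coordTrue' (p : L × L) : IsClosed {g : L × L → Bool | g p = true} := by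
  have h : {g : L × L → Bool | g p = true} = (fun g : L × L → Bool => g p) ⁻¹' {true} := by
    ext g; simp
  rw [h]
  exact IsClosed.preimage (continuous_apply p) (isClosed_discrete _)

theorem tauC_eq (hn : 0 < n) :
    tauC L n = TopologicalSpace.induced (phiOI : OI L n → L × L → Bool) inferInstance := by
  apply le_antisymm
  · have hcont : Continuous[tauC L n, Pi.topologicalSpace]
        (phiOI : OI L n → L × L → Bool) := by
      letI := tauC L n
      apply continuous_pi
      intro p
      apply continuous_to_bool
      · have : {x : OI L n | phiOI x p = true} = {x | p ∈ graphS x} := by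
          ext x; exact phiOI_eq_true
        rw [this]; exact isOpen_coord hn p
      · have : {x : OI L n | phiOI x p = false} = {x | p ∉ graphS x} := by
          ext x; exact phiOI_eq_false
        rw [this]; exact isOpen_coord_compl p
    exact continuous_iff_le_induced.mp hcont
  · apply le_generateFrom
    rintro U ⟨a, F, hF, rfl⟩
    letI := TopologicalSpace.induced (phiOI : OI L n → L × L → Bool) inferInstance
    have hphi : Continuous (phiOI : OI L n → L × L → Bool) := continuous_induced_dom
    have hopen : ∀ b : OI L n, IsOpen (upSet b) := by
      intro b
      have : upSet b = ⋂ p ∈ graphS b, {x : OI L n | p ∈ graphS x} := by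
        ext x
        simp only [Set.mem_iInter, Set.mem_setOf_eq]
        rw [show x ∈ upSet b ↔ nle b x from Iff.rfl, nle_iff]
        exact ⟨fun h p hp => h hp, fun h p hp => h p hp⟩
      rw [this]
      apply (graphS_finite b).isOpen_biInter
      intro p _
      have : {x : OI L n | p ∈ graphS x} = phiOI ⁻¹' {g | g p = true} := by
        ext x; exact phiOI_eq_true.symm
      rw [this]
      exact (isOpen_coordTrue' p).preimage hphi
    have hclosed : ∀ b : OI L n, IsClosed (upSet b) := by
      intro b
      have : upSet b = ⋂ p ∈ graphS b, {x : OI L n | p ∈ graphS x} := by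
        ext x
        simp only [Set.mem_iInter, Set.mem_setOf_eq]
        rw [show x ∈ upSet b ↔ nle b x from Iff.rfl, nle_iff]
        exact ⟨fun h p hp => h hp, fun h p hp => h p hp⟩
      rw [this]
      apply isClosed_biInter
      intro p _
      have : {x : OI L n | p ∈ graphS x} = phiOI ⁻¹' {g | g p = true} := by
        ext x; exact phiOI_eq_true.symm
      rw [this]
      exact (isClosed_coordTrue' p).preimage hphi
    exact (hopen a).sdiff ((Set.finite_mem_finset F).isClosed_biUnion fun b _ => hclosed b)

theorem range_phiOI :
    Set.range (phiOI : OI L n → L × L → Bool) =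
      {g | ∀ p q, g p = true → g q = true → (p.1 ≤ q.1 ↔ p.2 ≤ q.2)} ∩
      {g | {p | g p = true}.Finite ∧ {p | g p = true}.ncard ≤ n} := by
  ext g
  constructor
  · rintro ⟨a, rfl⟩
    have hset : {p | phiOI a p = true} = graphS a := by
      ext p; exact phiOI_eq_true
    refine ⟨fun p q hp hq => graphS_ord a p (phiOI_eq_true.mp hp) q (phiOI_eq_true.mp hq), ?_⟩
    show {p | phiOI a p = true}.Finite ∧ {p | phiOI a p = true}.ncard ≤ n
    rw [hset]
    exact ⟨graphS_finite a, graphS_ncard a⟩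
  · rintro ⟨hord, hfin, hcard⟩
    have hord' : ∀ p ∈ {p | g p = true}, ∀ q ∈ {p | g p = true},
        (p.1 ≤ q.1 ↔ p.2 ≤ q.2) := fun p hp q hq => hord p q hp hq
    refine ⟨⟨ofGraph {p | g p = true}, isOI_ofGraph hfin hcard hord'⟩, ?_⟩
    funext p
    have hg : graphS (⟨ofGraph {p | g p = true},
        isOI_ofGraph hfin hcard hord'⟩ : OI L n) = {p | g p = true} :=
      graphS_ofGraphOI hfin hcard hord' 
    by_cases hp : g p = true
    · rw [hp]
      apply phiOI_eq_true.mpr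
      rw [hg]
      exact hp
    · rw [Bool.not_eq_true] at hp
      rw [hp]
      apply phiOI_eq_false.mpr
      rw [hg]
      simp [hp]


theorem isClosed_range_phiOI :
    IsClosed (Set.range (phiOI : OI L n → L × L → Bool)) := by
  rw [range_phiOI]
  apply IsClosed.inter
  · have heq : {g : L × L → Bool | ∀ p q, g p = true → g q = true → (p.1 ≤ q.1 ↔ p.2 ≤ q.2)} =
        ⋂ (p : L × L) (q : L × L),
          {g : L × L → Bool | g p = true → g q = true → (p.1 ≤ q.1 ↔ p.2 ≤ q.2)} := by
      ext g; simp only [Set.mem_iInter, Set.mem_setOf_eq]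
    rw [heq]
    refine isClosed_iInter fun p => isClosed_iInter fun q => ?_
    by_cases hiff : (p.1 ≤ q.1 ↔ p.2 ≤ q.2)
    · have : {g : L × L → Bool | g p = true → g q = true → (p.1 ≤ q.1 ↔ p.2 ≤ q.2)} =
          Set.univ := by
        ext g; simp [hiff]
      rw [this]; exact isClosed_univ
    · have : {g : L × L → Bool | g p = true → g q = true → (p.1 ≤ q.1 ↔ p.2 ≤ q.2)} =
          ({g : L × L → Bool | g p = true} ∩ {g | g q = true})ᶜ := by
        ext g
        simp only [Set.mem_setOf_eq, Set.mem_compl_iff, Set.mem_inter_iff, not_and]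
        constructor
        · intro h hp hq; exact absurd (h hp hq) hiff
        · intro h hp _; exact absurd (h hp) (by simpa using ‹g q = true›)
      rw [this]
      exact (IsOpen.inter (isOpen_coordTrue' p) (isOpen_coordTrue' q)).isClosed_compl
  · rw [← isOpen_compl_iff]
    have heq : {g : L × L → Bool | {p | g p = true}.Finite ∧ {p | g p = true}.ncard ≤ n}ᶜ =
        ⋃ (F : Finset (L × L)) (_ : n < F.card), ⋂ p ∈ F, {g : L × L → Bool | g p = true} := by
      ext g
      simp only [Set.mem_compl_iff, Set.mem_setOf_eq, Set.mem_iUnion, Set.mem_iInter,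
        not_and]
      constructor
      · intro h
        by_cases hfin : {p | g p = true}.Finite
        · have hlt : n < {p | g p = true}.ncard := lt_of_not_ge (h hfin)
          refine ⟨hfin.toFinset, ?_, ?_⟩
          · rw [← Set.ncard_eq_toFinset_card _ hfin]
            exact hlt
          · intro p hp
            exact (Set.Finite.mem_toFinset hfin).mp hp
        · obtain ⟨F, hsub, hcard⟩ :=
            Set.Infinite.exists_subset_card_eq hfin (n + 1)
          refine ⟨F, by omega, fun p hp => hsub hp⟩
      · rintro ⟨F, hlt, hall⟩ hfin
        have hsub : (F : Set (L × L)) ⊆ {p | g p = true} := fun p hp => hall p hp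
        have := Set.ncard_le_ncard hsub hfin
        rw [Set.ncard_coe_finset] at this
        omega
    rw [heq]
    exact isOpen_iUnion fun F => isOpen_iUnion fun _ =>
      (Set.finite_mem_finset F).isOpen_biInter fun p _ => isOpen_coordTrue' p

/-- Reduction of continuity on `(OI, τ_c)` to openness of coordinate conditions. -/
theorem continuous_OI (hn : 0 < n) {h : OI L n → OI L n}
    (hiff : ∀ p : L × L, (∀ x, p ∈ graphS (h x) ↔ False) ∨
      ∃ q : L × L, ∀ x, p ∈ graphS (h x) ↔ q ∈ graphS x) :
    Continuous[tauC L n, tauC L n] h := by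
  have H : Continuous[tauC L n, Pi.topologicalSpace] (phiOI ∘ h) := by
    letI := tauC L n
    apply continuous_pi
    intro p
    apply continuous_to_bool
    · rcases hiff p with hf | ⟨q, hq⟩
      · have : {x | (phiOI ∘ h) x p = true} = (∅ : Set (OI L n)) := by
          ext x
          simp only [Set.mem_setOf_eq, Function.comp_apply, Set.mem_empty_iff_false, iff_false]
          intro hx
          exact (hf x).mp (phiOI_eq_true.mp hx)
        rw [this]; exact isOpen_empty
      · have : {x | (phiOI ∘ h) x p = true} = {x | q ∈ graphS x} := by
          ext x
          simp only [Set.mem_setOf_eq, Function.comp_apply]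
          rw [phiOI_eq_true]
          exact hq x
        rw [this]; exact isOpen_coord hn q
    · rcases hiff p with hf | ⟨q, hq⟩
      · have : {x | (phiOI ∘ h) x p = false} = (Set.univ : Set (OI L n)) := by
          ext x
          simp only [Set.mem_setOf_eq, Function.comp_apply, Set.mem_univ, iff_true]
          rw [phiOI_eq_false]
          intro hx
          exact (hf x).mp hx
        rw [this]; exact isOpen_univ
      · have : {x | (phiOI ∘ h) x p = false} = {x | q ∉ graphS x} := by
          ext x
          simp only [Set.mem_setOf_eq, Function.comp_apply]
          rw [phiOI_eq_false]
          exact not_congr (hq x)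
        rw [this]; exact isOpen_coord_compl q
  rw [tauC_eq hn] at H ⊢
  exact continuous_induced_rng.mpr H

end Aux

/-- The topology `τ_c` on `OI_n(L)` is Hausdorff and compact,
multiplication on `(OI_n(L), τ_c)` is separately continuous, and inversion
`α ↦ α⁻¹` is continuous. -/
theorem tauC_compact_hausdorff_shift_continuous_inv_continuous
    (L : Type u) [LinearOrder L] [Infinite L] (n : ℕ) (hn : 0 < n) :
    @T2Space (OI L n) (tauC L n) ∧ @CompactSpace (OI L n) (tauC L n) ∧
      (∀ γ : OI L n, Continuous[tauC L n, tauC L n] fun x : OI L n => γ * x) ∧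
      (∀ γ : OI L n, Continuous[tauC L n, tauC L n] fun x : OI L n => x * γ) ∧
      Continuous[tauC L n, tauC L n] fun x : OI L n => x⁻¹ := by
  have hind : tauC L n =
      TopologicalSpace.induced (phiOI : OI L n → L × L → Bool) inferInstance := tauC_eq hn
  have hemb : @Topology.IsEmbedding (OI L n) (L × L → Bool) (tauC L n) _ phiOI :=
    @Topology.IsEmbedding.mk (OI L n) (L × L → Bool) (tauC L n) _ phiOI
      (@Topology.IsInducing.mk (OI L n) (L × L → Bool) (tauC L n) _ phiOI hind)
      phiOI_injective
  refine ⟨?_, ?_, ?_, ?_, ?_⟩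
  · letI := tauC L n
    exact hemb.t2Space
  · letI := tauC L n
    have hce : Topology.IsClosedEmbedding (phiOI : OI L n → L × L → Bool) :=
      ⟨hemb, isClosed_range_phiOI⟩
    exact hce.compactSpace
  · intro γ
    apply continuous_OI hn
    intro p
    by_cases hd : (γ.1 p.1).Dom
    · refine Or.inr ⟨((γ.1 p.1).get hd, p.2), fun x => ?_⟩
      constructor
      · intro hx
        obtain ⟨m, hm, h2⟩ := mem_mulOI.mp hx
        rwa [show ((γ.1 p.1).get hd) = m from Part.get_eq_of_mem hm hd]
      · intro hx
        exact mem_mulOI.mpr ⟨(γ.1 p.1).get hd, Part.get_mem hd, hx⟩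
    · refine Or.inl fun x => ⟨fun hx => ?_, False.elim⟩
      obtain ⟨m, hm, _⟩ := mem_mulOI.mp hx
      exact hd (Part.dom_iff_mem.mpr ⟨m, hm⟩)
  · intro γ
    apply continuous_OI hn
    intro p
    by_cases hd : ∃ m, p.2 ∈ γ.1 m
    · obtain ⟨m₀, hm₀⟩ := hd
      refine Or.inr ⟨(p.1, m₀), fun x => ?_⟩
      constructor
      · intro hx
        obtain ⟨m, hm, h2⟩ := mem_mulOI.mp hx
        rwa [show m₀ = m from OI_inj γ hm₀ h2]
      · intro hx
        exact mem_mulOI.mpr ⟨m₀, hx, hm₀⟩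
    · refine Or.inl fun x => ⟨fun hx => ?_, False.elim⟩
      obtain ⟨m, _, h2⟩ := mem_mulOI.mp hx
      exact hd ⟨m, h2⟩
  · apply continuous_OI hn
    intro p
    exact Or.inr ⟨(p.2, p.1), fun x => mem_pinvOI⟩
end

section
/- Let τ be a Hausdorff compact topology on the semigroup OI_n(L) such that multiplication is separately continuous (both all left translations and all right translations are continuous). Then the space (OI_n(L), τ) is sequentially compact: every sequence of points of OI_n(L) has a convergent subsequence. -/
open Set Topology TopologicalSpace

universe u v

variable {L : Type u}

section Aux

variable [LinearOrder L] {n : ℕ}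

theorem OI.mul_def (a b : OI L n) : (a * b).1 = b.1.comp a.1 := rfl

theorem OI.inv_def (a : OI L n) : (a⁻¹).1 = _root_.pinv a.1 := rfl

theorem OI.mem_mul_iff (a b : OI L n) (z c : L) :
    c ∈ (a * b).1 z ↔ ∃ d, d ∈ a.1 z ∧ c ∈ b.1 d := by
  rw [OI.mul_def, PFun.comp_apply]
  exact Part.mem_bind_iff

theorem IsOI.inj {f : L →. L} (hf : IsOI n f) {a b c : L} (ha : c ∈ f a) (hb : c ∈ f b) :
    a = b := by
  have had : a ∈ f.Dom := (PFun.mem_dom _ _).mpr ⟨c, ha⟩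
  have hbd : b ∈ f.Dom := (PFun.mem_dom _ _).mpr ⟨c, hb⟩
  exact le_antisymm ((hf.2.2 a had b hbd c c ha hb).mpr le_rfl)
    ((hf.2.2 b hbd a had c c hb ha).mpr le_rfl)

theorem mem_pinv_iff {f : L →. L} (hf : IsOI n f) {b c : L} :
    b ∈ _root_.pinv f c ↔ c ∈ f b := by
  constructor
  · exact pinv_spec
  · intro h
    have hd : ∃ x, c ∈ f x := ⟨b, h⟩
    exact ⟨hd, hf.inj (Classical.choose_spec hd) h⟩

/-- The continuous "sandwich" map `x ↦ (y y⁻¹) (x (y⁻¹ y))`. -/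
noncomputable def phiMap (y x : OI L n) : OI L n := (y * y⁻¹) * (x * (y⁻¹ * y))

theorem mem_phi (y x : OI L n) (z b : L) :
    b ∈ (phiMap y x).1 z ↔ z ∈ y.1.Dom ∧ b ∈ x.1 z ∧ ∃ w, b ∈ y.1 w := by
  rw [phiMap, OI.mem_mul_iff]
  constructor
  · rintro ⟨d, hd, hb⟩
    rw [OI.mem_mul_iff] at hd hb
    obtain ⟨e, he, hde⟩ := hd
    rw [OI.inv_def, mem_pinv_iff y.2] at hde
    have hdz : d = z := y.2.inj hde he
    subst hdz
    obtain ⟨e', he', hb'⟩ := hb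
    rw [OI.mem_mul_iff] at hb'
    obtain ⟨w, hw, hbw⟩ := hb'
    rw [OI.inv_def, mem_pinv_iff y.2] at hw
    have : b = e' := Part.mem_unique hbw hw
    subst this
    exact ⟨(PFun.mem_dom _ _).mpr ⟨e, he⟩, he', ⟨w, hbw⟩⟩
  · rintro ⟨hz, hbx, w, hbw⟩
    have he : (y.1 z).get hz ∈ y.1 z := Part.get_mem hz
    refine ⟨z, ?_, ?_⟩
    · rw [OI.mem_mul_iff]
      exact ⟨(y.1 z).get hz, he, by rw [OI.inv_def, mem_pinv_iff y.2]; exact he⟩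
    · rw [OI.mem_mul_iff]
      refine ⟨b, hbx, ?_⟩
      rw [OI.mem_mul_iff]
      exact ⟨w, by rw [OI.inv_def, mem_pinv_iff y.2]; exact hbw, hbw⟩

/-- The extension relation on `OI_n(L)` : `x` extends `y` as a partial map. -/
def OIExt (y x : OI L n) : Prop := ∀ a b, b ∈ y.1 a → b ∈ x.1 a

theorem phi_eq_iff (y x : OI L n) : phiMap y x = y ↔ OIExt y x := by
  constructor
  · intro h a b hb
    have hb' : b ∈ (phiMap y x).1 a := by rw [h]; exact hb
    exact ((mem_phi y x a b).mp hb').2.1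
  · intro h
    apply Subtype.ext
    funext z
    apply Part.ext
    intro b
    rw [mem_phi]
    constructor
    · rintro ⟨hz, hbx, w, hbw⟩
      have hc : (y.1 z).get hz ∈ y.1 z := Part.get_mem hz
      have hcx : (y.1 z).get hz ∈ x.1 z := h z _ hc
      have hbc : b = (y.1 z).get hz := Part.mem_unique hbx hcx
      exact hbc ▸ hc
    · intro hb
      exact ⟨(PFun.mem_dom _ _).mpr ⟨b, hb⟩, h z b hb, ⟨z, hb⟩⟩

theorem OIExt.dom_subset {y x : OI L n} (h : OIExt y x) : y.1.Dom ⊆ x.1.Dom := by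
  intro a ha
  exact (PFun.mem_dom _ _).mpr ⟨(y.1 a).get ha, h a _ (Part.get_mem ha)⟩

theorem OIExt.eq_of_ncard_le {y x : OI L n} (h : OIExt y x)
    (hc : x.1.Dom.ncard ≤ y.1.Dom.ncard) : x = y := by
  have hdom : y.1.Dom = x.1.Dom := Set.eq_of_subset_of_ncard_le h.dom_subset hc x.2.1
  apply Subtype.ext
  funext a
  apply Part.ext
  intro b
  constructor
  · intro hbx
    have ha : a ∈ y.1.Dom := by
      rw [hdom]; exact (PFun.mem_dom _ _).mpr ⟨b, hbx⟩
    have hc' : (y.1 a).get ha ∈ y.1 a := Part.get_mem ha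
    have hcx : (y.1 a).get ha ∈ x.1 a := h a _ hc'
    exact (Part.mem_unique hbx hcx) ▸ hc'
  · exact h a b

/-- The set of elements whose graph lies inside `dom y × ran y` is finite. -/
theorem extSet_finite (y : OI L n) :
    {t : OI L n | ∀ a b, b ∈ t.1 a → a ∈ y.1.Dom ∧ ∃ w, b ∈ y.1 w}.Finite := by
  have hA : y.1.Dom.Finite := y.2.1
  have hB : {b | ∃ w, b ∈ y.1 w}.Finite := y.2.pinv.1
  set G : OI L n → Set (L × L) := fun t => {p | p.2 ∈ t.1 p.1} with hG
  have hGinj : Function.Injective G := by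
    intro t t' h
    apply Subtype.ext
    funext a
    apply Part.ext
    intro b
    exact Set.ext_iff.mp h (a, b)
  have h1 : {S : Set (L × L) | S ⊆ y.1.Dom ×ˢ {b | ∃ w, b ∈ y.1 w}}.Finite :=
    (hA.prod hB).finite_subsets
  have h2 : (G ⁻¹' {S : Set (L × L) | S ⊆ y.1.Dom ×ˢ {b | ∃ w, b ∈ y.1 w}}).Finite :=
    h1.preimage hGinj.injOn
  refine h2.subset ?_
  intro t ht
  intro p hp
  exact Set.mem_prod.mpr ⟨(ht p.1 p.2 hp).1, (ht p.1 p.2 hp).2⟩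

end Aux

/-- Every Hausdorff compact topology on `OI_n(L)` with separately
continuous multiplication is sequentially compact. -/
theorem seqCompact_of_compact_shift_continuous
    (L : Type u) [LinearOrder L] [Infinite L] (n : ℕ) (hn : 0 < n)
    [TopologicalSpace (OI L n)] [T2Space (OI L n)] [CompactSpace (OI L n)]
    (hright : ∀ γ : OI L n, Continuous fun x : OI L n => x * γ)
    (hleft : ∀ γ : OI L n, Continuous fun x : OI L n => γ * x) :
    SeqCompactSpace (OI L n) := by
  classical
  constructor
  intro s _hs
  -- Step 1: every infinite index set clusters at some point.
  have step1 : ∀ M : Set ℕ, M.Infinite →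
      ∃ y : OI L n, ∀ U ∈ 𝓝 y, (M ∩ s ⁻¹' U).Infinite := by
    intro M hM
    by_contra hno
    push_neg at hno
    choose U hU hfin using hno
    obtain ⟨t, ht⟩ := isCompact_univ.elim_nhds_subcover U (fun y _ => hU y)
    apply hM
    have hsub : M ⊆ ⋃ y ∈ t, M ∩ s ⁻¹' U y := by
      intro m hm
      have hmem : s m ∈ ⋃ y ∈ t, U y := ht.2 (mem_univ _)
      simp only [mem_iUnion] at hmem ⊢
      obtain ⟨y, hy, hsy⟩ := hmem
      exact ⟨y, hy, hm, hsy⟩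
    exact (Set.Finite.biUnion t.finite_toSet
      (fun y _ => hfin y)).subset hsub
  -- Step 2: given a cluster point `y` of `M`, extract a subset of `M` still clustering at `y`
  -- on which every value of `s` extends `y`.
  have step2 : ∀ (M : Set ℕ) (y : OI L n), (∀ U ∈ 𝓝 y, (M ∩ s ⁻¹' U).Infinite) →
      ∃ M', M' ⊆ M ∧ (∀ U ∈ 𝓝 y, (M' ∩ s ⁻¹' U).Infinite) ∧ ∀ m ∈ M', OIExt y (s m) := by
    intro M y hM
    set T := {t : OI L n | ∀ a b, b ∈ t.1 a → a ∈ y.1.Dom ∧ ∃ w, b ∈ y.1 w} with hT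
    have hTfin : T.Finite := extSet_finite y
    have hrange : ∀ x, phiMap y x ∈ T := by
      intro x a b hb
      obtain ⟨h1, h2, h3⟩ := (mem_phi y x a b).mp hb
      exact ⟨h1, h3⟩
    have hcont : Continuous (phiMap y) := (hleft (y * y⁻¹)).comp (hright (y⁻¹ * y))
    have hyy : phiMap y y = y := (phi_eq_iff y y).mpr (fun a b hb => hb)
    set W := phiMap y ⁻¹' ((T \ {y})ᶜ) with hW
    have hWopen : IsOpen W :=
      ((hTfin.subset diff_subset).isClosed.isOpen_compl).preimage hcont
    have hWy : y ∈ W := by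
      simp only [hW, mem_preimage, mem_compl_iff, mem_diff, mem_singleton_iff, hyy]
      tauto
    have hWnhds : W ∈ 𝓝 y := hWopen.mem_nhds hWy
    refine ⟨M ∩ s ⁻¹' W, inter_subset_left, ?_, ?_⟩
    · intro V hV
      have hsub : M ∩ s ⁻¹' (W ∩ V) ⊆ (M ∩ s ⁻¹' W) ∩ s ⁻¹' V := by
        rintro m ⟨h1, h2⟩
        exact ⟨⟨h1, h2.1⟩, h2.2⟩
      exact (hM _ (Filter.inter_mem hWnhds hV)).mono hsub
    · rintro m ⟨-, hw⟩
      have hphi : phiMap y (s m) = y := by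
        by_contra hne
        exact (mem_preimage.mp hw) ⟨hrange (s m), hne⟩
      exact (phi_eq_iff y (s m)).mp hphi
  -- The ranks of admissible cluster points.
  set Good : Set ℕ → OI L n → Prop := fun M y =>
    (∀ U ∈ 𝓝 y, (M ∩ s ⁻¹' U).Infinite) ∧ ∀ m ∈ M, OIExt y (s m) with hGoodDef
  set R : Set ℕ := {k | ∃ M y, Good M y ∧ y.1.Dom.ncard = k} with hR
  obtain ⟨y0, hy0⟩ := step1 univ infinite_univ
  obtain ⟨M0, -, hc0, he0⟩ := step2 univ y0 hy0
  have hRne : R.Nonempty := ⟨_, M0, y0, ⟨hc0, he0⟩, rfl⟩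
  have hRbdd : BddAbove R := by
    refine ⟨n, ?_⟩
    rintro k ⟨M, y, hG, rfl⟩
    exact y.2.2.1
  obtain ⟨M, y, hGood, hrank⟩ := Nat.sSup_mem hRne hRbdd
  -- `s` converges to `y` along a cofinite subset of `M`.
  have hcofin : ∀ U ∈ 𝓝 y, (M \ s ⁻¹' U).Finite := by
    intro U hU
    by_contra hinf
    have hinf' : (M \ s ⁻¹' U).Infinite := hinf
    obtain ⟨y', hy'⟩ := step1 _ hinf'
    obtain ⟨M', hM'sub, hc', he'⟩ := step2 _ y' hy'
    have hne : y' ≠ y := by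
      rintro rfl
      obtain ⟨m, hm⟩ := (hy' U hU).nonempty
      exact hm.1.2 hm.2
    have hphi : phiMap y y' = y := by
      by_contra hne2
      have hUo : (phiMap y) ⁻¹' ({y}ᶜ) ∈ 𝓝 y' := by
        refine (isClosed_singleton.isOpen_compl.preimage
          ((hleft (y * y⁻¹)).comp (hright (y⁻¹ * y)))).mem_nhds ?_
        exact hne2
      obtain ⟨m, hm⟩ := (hc' _ hUo).nonempty
      have hmM : m ∈ M := (hM'sub hm.1).1
      have heq : phiMap y (s m) = y := (phi_eq_iff _ _).mpr (hGood.2 m hmM)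
      have : s m ∈ (phiMap y) ⁻¹' ({y}ᶜ) := hm.2
      rw [mem_preimage, mem_compl_iff, mem_singleton_iff] at this
      exact this heq
    have hext : OIExt y y' := (phi_eq_iff _ _).mp hphi
    have hlt : y.1.Dom.ncard < y'.1.Dom.ncard := by
      rcases lt_or_ge y.1.Dom.ncard y'.1.Dom.ncard with h | h
      · exact h
      · exact absurd (hext.eq_of_ncard_le h) hne
    have hmem : y'.1.Dom.ncard ∈ R := ⟨M', y', ⟨hc', he'⟩, rfl⟩
    have hle := le_csSup hRbdd hmem
    omega
  have hMinf : M.Infinite := (hGood.1 univ Filter.univ_mem).mono inter_subset_left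
  refine ⟨y, mem_univ _, Nat.nth (· ∈ M), Nat.nth_strictMono hMinf, ?_⟩
  rw [Filter.tendsto_def]
  intro U hU
  obtain ⟨N, hN⟩ := (hcofin U hU).bddAbove
  rw [Filter.mem_atTop_sets]
  refine ⟨N + 1, fun j hj => ?_⟩
  have hmemM : Nat.nth (· ∈ M) j ∈ M := Nat.nth_mem_of_infinite hMinf j
  have hge : N + 1 ≤ Nat.nth (· ∈ M) j :=
    le_trans hj (Nat.nth_strictMono hMinf).le_apply
  by_contra hnot
  have : Nat.nth (· ∈ M) j ∈ M \ s ⁻¹' U := ⟨hmemM, hnot⟩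
  have := hN this
  omega
end
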